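/- arXiv:1902.00832 — 2 statements merged into one kernel-verified Lean document; each statement's English description precedes it below -/
import Mathlib

section
/- Let 0 < δ ≤ 1/(64·d²·L) and let x, y ∈ ℝ^d satisfy x = y − δ∇U(y) + √(2δ)·T. Then the matrix I − δ∇²U(y) is invertible and |det(I − δ∇²U(y))^{-1} − (1 + δ·tr(∇²U(x)))| ≤ 8·δ^{3/2}·d·L^{3/2}·(‖x‖₂ + 1). -/
/-!
The Hessian `A = ∇²U(y)` is symmetric with eigenvalues `|λᵢ| ≤ L`, so
`det (I - δA) = ∏ (1 - δλᵢ)`, which agrees with `1 - δ tr A` up to `(dδL)²`; inverting,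
`det (I - δA)⁻¹ = 1 + δ tr A + O((dδL)²)`. Moving the trace from `y` to `x` costs
`δ d L ‖x - y‖` since `∇²U` is `L`-Lipschitz, and `‖x - y‖ ≤ δL‖y‖ + √(2δL)` because `∇U`
is `L`-Lipschitz with `∇U(0) = 0`.
With `s = √(δL)` and `d s ≤ 1/8` every error term is at most a multiple of `d s³ (‖x‖ + 1)`.
-/

/-- The Hessian matrix of `U : ℝ^d → ℝ` at `x`. -/
noncomputable def hessMat {d : ℕ} (U : EuclideanSpace ℝ (Fin d) → ℝ)
    (x : EuclideanSpace ℝ (Fin d)) : Matrix (Fin d) (Fin d) ℝ :=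
  fun i j =>
    iteratedFDeriv ℝ 2 U x ![EuclideanSpace.single i 1, EuclideanSpace.single j 1]

lemma Finset.abs_prod_one_add_sub_le {ι : Type*} (s : Finset ι) (b : ι → ℝ)
    (h : ∑ i ∈ s, |b i| ≤ 1) :
    |∏ i ∈ s, (1 + b i) - (1 + ∑ i ∈ s, b i)| ≤ (∑ i ∈ s, |b i|) ^ 2 := by
  classical
  induction s using Finset.induction_on with
  | empty => simp
  | insert a s ha ih =>
    rw [Finset.sum_insert ha] at h ⊢
    rw [Finset.prod_insert ha, Finset.sum_insert ha]
    set S := ∑ i ∈ s, |b i|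
    have hS : 0 ≤ S := Finset.sum_nonneg fun i _ => abs_nonneg _
    have ih := ih (by linarith [abs_nonneg (b a)])
    have hsum : |∑ i ∈ s, b i| ≤ S := Finset.abs_sum_le_sum_abs _ _
    have key : (1 + b a) * ∏ i ∈ s, (1 + b i) - (1 + (b a + ∑ i ∈ s, b i)) =
        (1 + b a) * (∏ i ∈ s, (1 + b i) - (1 + ∑ i ∈ s, b i)) + b a * ∑ i ∈ s, b i := by ring
    rw [key]
    calc _ ≤ (1 + |b a|) * S ^ 2 + |b a| * S := by
          refine (abs_add_le _ _).trans (add_le_add ?_ ?_) <;> rw [abs_mul]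
          · exact mul_le_mul ((abs_add_le _ _).trans (by simp)) ih (abs_nonneg _) (by positivity)
          · exact mul_le_mul_of_nonneg_left hsum (abs_nonneg _)
      _ ≤ (|b a| + S) ^ 2 := by
        have hS1 : 0 ≤ 1 - S := by linarith [abs_nonneg (b a)]
        nlinarith [sq_nonneg |b a|, mul_nonneg (mul_nonneg (abs_nonneg (b a)) hS) hS1]

lemma abs_inv_sub_one_add_le {D t X : ℝ} (hD : |D - (1 - t)| ≤ X ^ 2) (ht : |t| ≤ X)
    (hX : X ≤ 1 / 4) : 0 < D ∧ |D⁻¹ - (1 + t)| ≤ 5 * X ^ 2 := by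
  have hX0 : 0 ≤ X := (abs_nonneg t).trans ht
  obtain ⟨hD₁, -⟩ := abs_le.1 hD
  obtain ⟨ht₁, ht₂⟩ := abs_le.1 ht
  have hDhalf : 1 / 2 ≤ D := by nlinarith [mul_le_mul_of_nonneg_left hX hX0]
  have hD0 : 0 < D := by linarith
  refine ⟨hD0, ?_⟩
  have hnum : |1 - D * (1 + t)| ≤ 9 / 4 * X ^ 2 := by
    have h1t : |1 + t| ≤ 5 / 4 := abs_le.2 ⟨by linarith, by linarith⟩
    calc |1 - D * (1 + t)| = |t ^ 2 - (D - (1 - t)) * (1 + t)| := by ring_nf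
      _ ≤ |t ^ 2| + |D - (1 - t)| * |1 + t| := by rw [← abs_mul]; exact abs_sub _ _
      _ ≤ X ^ 2 + X ^ 2 * (5 / 4) := by
        gcongr
        rw [abs_pow]; exact pow_le_pow_left₀ (abs_nonneg t) ht 2
      _ = 9 / 4 * X ^ 2 := by ring
  rw [show D⁻¹ - (1 + t) = (1 - D * (1 + t)) / D by field_simp, abs_div, abs_of_pos hD0,
    div_le_iff₀ hD0]
  nlinarith [mul_le_mul_of_nonneg_left hDhalf (sq_nonneg X)]

namespace Matrix.IsHermitian

variable {n : Type*} [Fintype n] [DecidableEq n] {A : Matrix n n ℝ}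

lemma det_one_sub_smul (hA : A.IsHermitian) (r : ℝ) :
    (1 - r • A).det = ∏ i, (1 - r * hA.eigenvalues i) := by
  have hdiag : (1 : Matrix n n ℝ) - r • diagonal hA.eigenvalues =
      diagonal fun i => 1 - r * hA.eigenvalues i := by
    ext i j; by_cases h : i = j <;> simp [h]
  conv_lhs => rw [hA.spectral_theorem]
  rw [← map_one (Unitary.conjStarAlgAut ℝ _ hA.eigenvectorUnitary), ← map_smul, ← map_sub]
  simp only [Unitary.conjStarAlgAut_apply, det_mul, Function.comp_def, RCLike.ofReal_real_eq_id,
    id, hdiag, det_diagonal]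
  rw [mul_comm, ← mul_assoc, ← det_mul, Unitary.coe_star_mul_self, det_one, one_mul]

variable (hA : A.IsHermitian) {r μ : ℝ} (hr : 0 ≤ r) (hμ : ∀ i, |hA.eigenvalues i| ≤ μ)
include hA hr hμ

lemma abs_mul_trace_le : |r * A.trace| ≤ Fintype.card n * (r * μ) := by
  rw [hA.trace_eq_sum_eigenvalues, abs_mul, abs_of_nonneg hr, mul_left_comm]
  gcongr
  calc |∑ i, (hA.eigenvalues i : ℝ)| ≤ ∑ i, |hA.eigenvalues i| := Finset.abs_sum_le_sum_abs _ _
    _ ≤ ∑ _i : n, μ := Finset.sum_le_sum fun i _ => hμ i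
    _ = Fintype.card n * μ := by simp

lemma abs_det_one_sub_smul_sub_le (hsmall : Fintype.card n * (r * μ) ≤ 1) :
    |(1 - r • A).det - (1 - r * A.trace)| ≤ (Fintype.card n * (r * μ)) ^ 2 := by
  have hb : ∑ i, |-(r * hA.eigenvalues i)| ≤ Fintype.card n * (r * μ) := by
    calc ∑ i, |-(r * hA.eigenvalues i)| ≤ ∑ _i : n, r * μ := Finset.sum_le_sum fun i _ => by
          rw [abs_neg, abs_mul, abs_of_nonneg hr]; exact mul_le_mul_of_nonneg_left (hμ i) hr
      _ = Fintype.card n * (r * μ) := by simp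
  have := Finset.univ.abs_prod_one_add_sub_le (fun i => -(r * hA.eigenvalues i)) (hb.trans hsmall)
  rw [hA.det_one_sub_smul, hA.trace_eq_sum_eigenvalues]
  simp only [← sub_eq_add_neg, Finset.sum_neg_distrib] at this
  simp only [RCLike.ofReal_real_eq_id, id, Finset.mul_sum]
  exact this.trans (pow_le_pow_left₀ (Finset.sum_nonneg fun _ _ => abs_nonneg _) hb 2)

lemma abs_inv_det_one_sub_smul_sub_le (hsmall : Fintype.card n * (r * μ) ≤ 1 / 4) :
    0 < (1 - r • A).det ∧
      |(1 - r • A).det⁻¹ - (1 + r * A.trace)| ≤ 5 * (Fintype.card n * (r * μ)) ^ 2 :=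
  abs_inv_sub_one_add_le (hA.abs_det_one_sub_smul_sub_le hr hμ (by linarith))
    (hA.abs_mul_trace_le hr hμ) hsmall

end Matrix.IsHermitian

lemma ContinuousMultilinearMap.norm_apply_two_le {E F : Type*} [NormedAddCommGroup E]
    [NormedSpace ℝ E] [NormedAddCommGroup F] [NormedSpace ℝ F]
    (M : ContinuousMultilinearMap ℝ (fun _ : Fin 2 => E) F) (v w : E) :
    ‖M ![v, w]‖ ≤ ‖M‖ * (‖v‖ * ‖w‖) := by
  simpa [Fin.prod_univ_two] using M.le_opNorm ![v, w]

section Lipschitz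

variable {E F : Type*} [NormedAddCommGroup E] [NormedSpace ℝ E] [NormedAddCommGroup F]
  [NormedSpace ℝ F] {f : E → F} {C : ℝ}

lemma norm_iteratedFDeriv_sub_le {n : ℕ} (hf : ContDiff ℝ (n + 1) f)
    (hC : ∀ z, ‖iteratedFDeriv ℝ (n + 1) f z‖ ≤ C) (z w : E) :
    ‖iteratedFDeriv ℝ n f z - iteratedFDeriv ℝ n f w‖ ≤ C * ‖z - w‖ :=
  Convex.norm_image_sub_le_of_norm_fderiv_le (𝕜 := ℝ) (s := Set.univ)
    (fun v _ => (hf.differentiable_iteratedFDeriv (by norm_cast; omega)) v)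
    (fun v _ => by rw [norm_fderiv_iteratedFDeriv]; exact hC v) convex_univ trivial trivial

lemma norm_fderiv_sub_le (hf : ContDiff ℝ 2 f) (hC : ∀ z, ‖iteratedFDeriv ℝ 2 f z‖ ≤ C)
    (z w : E) : ‖fderiv ℝ f z - fderiv ℝ f w‖ ≤ C * ‖z - w‖ :=
  Convex.norm_image_sub_le_of_norm_fderiv_le (𝕜 := ℝ) (s := Set.univ)
    (fun v _ => (hf.fderiv_right (m := 1) le_rfl).differentiable one_ne_zero v)
    (fun v _ => by rw [← norm_iteratedFDeriv_one, norm_iteratedFDeriv_fderiv]; exact hC v)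
    convex_univ trivial trivial

end Lipschitz

section Hessian

open Matrix

variable {d : ℕ} {U : EuclideanSpace ℝ (Fin d) → ℝ} {L : ℝ}

lemma abs_apply_single_single_le
    (M : ContinuousMultilinearMap ℝ (fun _ : Fin 2 => EuclideanSpace ℝ (Fin d)) ℝ) (i j : Fin d) :
    |M ![EuclideanSpace.single i 1, EuclideanSpace.single j 1]| ≤ ‖M‖ := by
  simpa using M.norm_apply_two_le (EuclideanSpace.single i 1) (EuclideanSpace.single j 1)

lemma hessMat_isHermitian (hU : ContDiff ℝ 2 U) (x : EuclideanSpace ℝ (Fin d)) :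
    (hessMat U x).IsHermitian :=
  IsHermitian.ext fun _ _ =>
    IsSymmSndFDerivAt.iteratedFDeriv_cons (hf := hU.contDiffAt.isSymmSndFDerivAt (by simp))

lemma dotProduct_hessMat_mulVec (x v w : EuclideanSpace ℝ (Fin d)) :
    (v : Fin d → ℝ) ⬝ᵥ hessMat U x *ᵥ w = iteratedFDeriv ℝ 2 U x ![v, w] := by
  have hB : ∀ a b, iteratedFDeriv ℝ 2 U x ![a, b] = fderiv ℝ (fderiv ℝ U) x a b := fun a b => by
    simp [iteratedFDeriv_two_apply]
  have hsum := fun v : EuclideanSpace ℝ (Fin d) => (EuclideanSpace.basisFun (Fin d) ℝ).sum_repr v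
  simp only [EuclideanSpace.basisFun_repr, EuclideanSpace.basisFun_apply] at hsum
  conv_rhs => rw [hB, ← hsum v, ← hsum w]
  simp [hessMat, hB, dotProduct, mulVec, Finset.mul_sum, mul_comm, mul_left_comm]
  exact Finset.sum_comm

lemma abs_eigenvalues_hessMat_le (hU : ContDiff ℝ 2 U) (x : EuclideanSpace ℝ (Fin d))
    (i : Fin d) : |(hessMat_isHermitian hU x).eigenvalues i| ≤ ‖iteratedFDeriv ℝ 2 U x‖ := by
  set v := (hessMat_isHermitian hU x).eigenvectorBasis i
  have hv : ‖v‖ = 1 := (hessMat_isHermitian hU x).eigenvectorBasis.orthonormal.1 i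
  rw [(hessMat_isHermitian hU x).eigenvalues_eq, star_trivial]
  simpa [hv, dotProduct_hessMat_mulVec] using (iteratedFDeriv ℝ 2 U x).norm_apply_two_le v v

lemma abs_trace_hessMat_sub_le (hU : ContDiff ℝ 3 U) (hL : ∀ z, ‖iteratedFDeriv ℝ 3 U z‖ ≤ L)
    (z w : EuclideanSpace ℝ (Fin d)) :
    |(hessMat U z).trace - (hessMat U w).trace| ≤ d * (L * ‖z - w‖) := by
  have hentry : ∀ i, |hessMat U z i i - hessMat U w i i| ≤ L * ‖z - w‖ := fun i =>
    (abs_apply_single_single_le (iteratedFDeriv ℝ 2 U z - iteratedFDeriv ℝ 2 U w) i i).trans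
      (norm_iteratedFDeriv_sub_le hU hL z w)
  calc |(hessMat U z).trace - (hessMat U w).trace|
      = |∑ i, (hessMat U z i i - hessMat U w i i)| := by
        simp [trace, Finset.sum_sub_distrib]
    _ ≤ ∑ i, |hessMat U z i i - hessMat U w i i| := Finset.abs_sum_le_sum_abs _ _
    _ ≤ ∑ _i : Fin d, L * ‖z - w‖ := Finset.sum_le_sum fun i _ => hentry i
    _ = d * (L * ‖z - w‖) := by simp

lemma norm_gradient_le (hU : ContDiff ℝ 2 U) (h0 : gradient U 0 = 0)
    (hL : ∀ z, ‖iteratedFDeriv ℝ 2 U z‖ ≤ L) (y : EuclideanSpace ℝ (Fin d)) :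
    ‖gradient U y‖ ≤ L * ‖y‖ := by
  have := norm_fderiv_sub_le hU hL y 0
  rwa [← toDual_gradient, ← toDual_gradient, ← map_sub, LinearIsometryEquiv.norm_map, h0,
    sub_zero, sub_zero] at this

lemma abs_inv_det_one_sub_smul_hessMat_sub_le (hU : ContDiff ℝ 2 U)
    (hL : ∀ z, ‖iteratedFDeriv ℝ 2 U z‖ ≤ L) (y : EuclideanSpace ℝ (Fin d)) {δ : ℝ} (hδ : 0 ≤ δ)
    (hsmall : d * (δ * L) ≤ 1 / 4) :
    IsUnit (1 - δ • hessMat U y) ∧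
      |(1 - δ • hessMat U y).det⁻¹ - (1 + δ * (hessMat U y).trace)| ≤ 5 * (d * (δ * L)) ^ 2 := by
  have h := (hessMat_isHermitian hU y).abs_inv_det_one_sub_smul_sub_le hδ
    (fun i => (abs_eigenvalues_hessMat_le hU y i).trans (hL y)) (by rwa [Fintype.card_fin])
  rw [Fintype.card_fin] at h
  exact ⟨(isUnit_iff_isUnit_det _).2 h.1.ne'.isUnit, h.2⟩

end Hessian

section Step

variable {E : Type*} [NormedAddCommGroup E]

lemma norm_sub_le_of_eq_sub_smul_add_smul [NormedSpace ℝ E] {x y g T : E} {δ L : ℝ}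
    (hδ : 0 ≤ δ) (hg : ‖g‖ ≤ L * ‖y‖) (hT : ‖T‖ ≤ Real.sqrt L)
    (hxy : x = y - δ • g + Real.sqrt (2 * δ) • T) :
    ‖x - y‖ ≤ δ * L * ‖y‖ + 2 * Real.sqrt (δ * L) := by
  have hnoise : ‖Real.sqrt (2 * δ) • T‖ ≤ 2 * Real.sqrt (δ * L) := by
    rw [norm_smul, Real.norm_of_nonneg (Real.sqrt_nonneg _)]
    calc Real.sqrt (2 * δ) * ‖T‖ ≤ Real.sqrt (2 * δ) * Real.sqrt L := by gcongr
      _ = Real.sqrt 2 * Real.sqrt (δ * L) := by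
        rw [← Real.sqrt_mul (by positivity), ← Real.sqrt_mul zero_le_two, mul_assoc]
      _ ≤ 2 * Real.sqrt (δ * L) := by
        gcongr
        exact Real.sqrt_le_iff.2 ⟨zero_le_two, by norm_num⟩
  have hdrift : ‖δ • g‖ ≤ δ * L * ‖y‖ := by
    rw [norm_smul, Real.norm_of_nonneg hδ, mul_assoc]
    exact mul_le_mul_of_nonneg_left hg hδ
  rw [hxy, show y - δ • g + Real.sqrt (2 * δ) • T - y = Real.sqrt (2 * δ) • T - δ • g by abel]
  linarith [norm_sub_le (Real.sqrt (2 * δ) • T) (δ • g)]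

lemma five_mul_sq_add_mul_norm_sub_le {x y : E} {d s : ℝ} (hd : 1 ≤ d) (hs : 0 ≤ s)
    (hds : d * s ≤ 1 / 8) (hxy : ‖x - y‖ ≤ s ^ 2 * ‖y‖ + 2 * s) :
    5 * (d * s ^ 2) ^ 2 + d * s ^ 2 * ‖x - y‖ ≤ 8 * d * s ^ 3 * (‖x‖ + 1) := by
  have hs8 : s ≤ 1 / 8 := by nlinarith
  have hy : ‖y‖ ≤ 2 * (‖x‖ + 1) := by
    have : s ^ 2 * ‖y‖ ≤ 1 / 64 * ‖y‖ := by gcongr; nlinarith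
    have := norm_sub_norm_le y x
    rw [norm_sub_rev] at this
    linarith [norm_nonneg x]
  have hxy' : ‖x - y‖ ≤ s ^ 2 * (2 * (‖x‖ + 1)) + 2 * s := hxy.trans (by gcongr)
  have hM : 0 ≤ d * s ^ 3 := by positivity
  have hMx : d * s ^ 3 ≤ d * s ^ 3 * (‖x‖ + 1) :=
    le_mul_of_one_le_right hM (by linarith [norm_nonneg x])
  have h1 : 5 * (d * s ^ 2) ^ 2 ≤ d * s ^ 3 := by
    rw [show 5 * (d * s ^ 2) ^ 2 = 5 * (d * s) * (d * s ^ 3) by ring]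
    exact mul_le_of_le_one_left hM (by linarith)
  have h2 : d * s ^ 2 * (s ^ 2 * (2 * (‖x‖ + 1))) ≤ d * s ^ 3 * (‖x‖ + 1) := by
    rw [show d * s ^ 2 * (s ^ 2 * (2 * (‖x‖ + 1))) = 2 * s * (d * s ^ 3 * (‖x‖ + 1)) by ring]
    exact mul_le_of_le_one_left (by positivity) (by linarith)
  calc _ ≤ 5 * (d * s ^ 2) ^ 2 + d * s ^ 2 * (s ^ 2 * (2 * (‖x‖ + 1)) + 2 * s) := by gcongr
    _ = 5 * (d * s ^ 2) ^ 2 + d * s ^ 2 * (s ^ 2 * (2 * (‖x‖ + 1))) + 2 * (d * s ^ 3) := by ring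
    _ ≤ 8 * d * s ^ 3 * (‖x‖ + 1) := by linarith

end Step

theorem stmt4 {d : ℕ} (hd : 0 < d) (U : EuclideanSpace ℝ (Fin d) → ℝ)
    (L : ℝ) (hL : 0 < L) (hU : ContDiff ℝ 3 U)
    (hgrad0 : gradient U 0 = 0)
    (hHess : ∀ z, ‖iteratedFDeriv ℝ 2 U z‖ ≤ L)
    (hD3 : ∀ z, ‖iteratedFDeriv ℝ 3 U z‖ ≤ L)
    (T : EuclideanSpace ℝ (Fin d)) (hT : ‖T‖ ≤ Real.sqrt L)
    (δ : ℝ) (hδ0 : 0 < δ) (hδ : δ ≤ 1 / (64 * d ^ 2 * L))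
    (x y : EuclideanSpace ℝ (Fin d))
    (hxy : x = y - δ • gradient U y + Real.sqrt (2 * δ) • T) :
    IsUnit (1 - δ • hessMat U y) ∧
      |((1 - δ • hessMat U y).det)⁻¹ - (1 + δ * (hessMat U x).trace)| ≤
        8 * (δ * Real.sqrt δ) * (d : ℝ) * (L * Real.sqrt L) * (‖x‖ + 1) := by
  have hd1 : (1 : ℝ) ≤ d := by exact_mod_cast hd
  have hU2 : ContDiff ℝ 2 U := hU.of_le (by norm_num)
  set s := Real.sqrt (δ * L)
  have hs0 : 0 ≤ s := Real.sqrt_nonneg _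
  have hsq : s ^ 2 = δ * L := Real.sq_sqrt (by positivity)
  have hds : d * s ≤ 1 / 8 := by
    rw [le_div_iff₀ (by positivity)] at hδ
    nlinarith
  obtain ⟨hunit, hdet⟩ := abs_inv_det_one_sub_smul_hessMat_sub_le hU2 hHess y hδ0.le
    (by rw [← hsq]; nlinarith)
  rw [← hsq] at hdet
  refine ⟨hunit, ?_⟩
  have hstep : ‖x - y‖ ≤ s ^ 2 * ‖y‖ + 2 * s := by
    rw [hsq]
    exact norm_sub_le_of_eq_sub_smul_add_smul hδ0.le (norm_gradient_le hU2 hgrad0 hHess y) hT hxy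
  have htr := abs_trace_hessMat_sub_le hU hD3 x y
  set D := (1 - δ • hessMat U y).det
  set tx := (hessMat U x).trace
  set ty := (hessMat U y).trace
  calc |D⁻¹ - (1 + δ * tx)| ≤ |D⁻¹ - (1 + δ * ty)| + δ * |tx - ty| := by
        rw [show D⁻¹ - (1 + δ * tx) = (D⁻¹ - (1 + δ * ty)) - δ * (tx - ty) by ring]
        exact (abs_sub _ _).trans_eq (by rw [abs_mul, abs_of_pos hδ0])
    _ ≤ 5 * (d * s ^ 2) ^ 2 + d * s ^ 2 * ‖x - y‖ := by
        grw [hdet, htr, hsq]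
        exact le_of_eq (by ring)
    _ ≤ 8 * d * s ^ 3 * (‖x‖ + 1) := five_mul_sq_add_mul_norm_sub_le hd1 hs0 hds hstep
    _ = 8 * (δ * Real.sqrt δ) * d * (L * Real.sqrt L) * (‖x‖ + 1) := by
        rw [pow_succ, hsq, show s = Real.sqrt δ * Real.sqrt L from Real.sqrt_mul hδ0.le L]
        ring
end

section
/- Let G be a symmetric d×d real matrix with ‖G‖₂ ≤ √L and let H be a symmetric d×d real matrix with ‖H‖₂ ≤ L. Then for every δ with 0 < δ ≤ 1/(2^8 · d² · L), the matrix I − δH + √(2δ)·G is invertible and |det(I − δH + √(2δ)·G)^{-1} − (1 − √(2δ)·tr(G) + δ·tr(H) + δ·(tr G)² + δ·tr(G²))| ≤ 90·δ^{3/2}·d³·L^{3/2}. -/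
/-!
Put `E = √(2δ) • G - δ • H`, so that the matrix is `1 + E` with `E` symmetric and
`‖E‖ ≤ 2 √(δL)`, while `d √(δL) ≤ 1/16`. Diagonalising `E` gives `det (1 + E)⁻¹ = ∏ (1 + μᵢ)⁻¹`,
and for small `μᵢ` this product agrees with `1 - Σ μᵢ + ((Σ μᵢ)² + Σ μᵢ²) / 2 =
1 - tr E + ((tr E)² + tr (E²)) / 2` up to `O((d ‖E‖)³)`. Since `δ • H` is of second order,
replacing `E` by `√(2δ) • G` in the quadratic terms costs another `O(d³ (δL)^{3/2})`, and
`(√(2δ))² = 2δ` turns the result into the stated expansion.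
-/

/-- The operator norm of a `d × d` real matrix with respect to the Euclidean
norm on `ℝ^d`. -/
noncomputable def matOpNorm {d : ℕ} (A : Matrix (Fin d) (Fin d) ℝ) : ℝ :=
  ‖Matrix.toEuclideanCLM (𝕜 := ℝ) A‖

open Finset
open scoped Matrix.Norms.L2Operator

namespace Finset
variable {ι : Type*} {s : Finset ι} {x : ι → ℝ} {ε : ℝ}

theorem abs_sum_le_card_mul (hx : ∀ i ∈ s, |x i| ≤ ε) : |∑ i ∈ s, x i| ≤ #s * ε :=
  (abs_sum_le_sum_abs _ _).trans <| by simpa using sum_le_sum hx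

theorem sq_sum_le_card_mul_sq (hx : ∀ i ∈ s, |x i| ≤ ε) : (∑ i ∈ s, x i) ^ 2 ≤ (#s * ε) ^ 2 :=
  sq_le_sq' (abs_le.mp (abs_sum_le_card_mul hx)).1 (abs_le.mp (abs_sum_le_card_mul hx)).2

theorem sum_sq_le_card_mul_sq (hx : ∀ i ∈ s, |x i| ≤ ε) : ∑ i ∈ s, x i ^ 2 ≤ (#s * ε) ^ 2 := by
  have hsq (i) (hi : i ∈ s) : x i ^ 2 ≤ ε ^ 2 :=
    sq_le_sq' (abs_le.mp (hx i hi)).1 (abs_le.mp (hx i hi)).2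
  calc ∑ i ∈ s, x i ^ 2 ≤ #s * ε ^ 2 := by simpa using sum_le_sum hsq
    _ ≤ (#s : ℝ) ^ 2 * ε ^ 2 := by
        gcongr
        exact_mod_cast Nat.le_self_pow two_ne_zero _
    _ = (#s * ε) ^ 2 := by ring

theorem abs_sq_sum_sub_sum_sq_le (hx : ∀ i ∈ s, |x i| ≤ ε) :
    |(∑ i ∈ s, x i) ^ 2 - ∑ i ∈ s, x i ^ 2| ≤ (#s * ε) ^ 2 :=
  abs_sub_le_of_nonneg_of_le (sq_nonneg _) (sq_sum_le_card_mul_sq hx)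
    (sum_nonneg fun _ _ => sq_nonneg _) (sum_sq_le_card_mul_sq hx)

theorem abs_prod_one_add_sub_le_s13 (hε : 0 ≤ ε) (hx : ∀ i ∈ s, |x i| ≤ ε) (h : #s * ε ≤ 1 / 2) :
    |∏ i ∈ s, (1 + x i) -
        (1 + ∑ i ∈ s, x i + ((∑ i ∈ s, x i) ^ 2 - ∑ i ∈ s, x i ^ 2) / 2)| ≤ (#s * ε) ^ 3 := by
  classical
  induction s using Finset.induction_on with
  | empty => simp
  | insert a s ha ih =>
    have hxa := hx a (mem_insert_self a s)
    have hxs : ∀ i ∈ s, |x i| ≤ ε := fun i hi => hx i (mem_insert_of_mem hi)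
    rw [card_insert_of_notMem ha, Nat.cast_succ] at h ⊢
    have ih := ih hxs (by nlinarith)
    have hSQ := abs_sq_sum_sub_sum_sq_le hxs
    rw [prod_insert ha, sum_insert ha, sum_insert ha]
    set m : ℝ := #s * ε
    set S := ∑ i ∈ s, x i
    set Q := ∑ i ∈ s, x i ^ 2
    set P := ∏ i ∈ s, (1 + x i)
    have hm : 0 ≤ m := by positivity
    calc _ = |(1 + x a) * (P - (1 + S + (S ^ 2 - Q) / 2)) + x a * (S ^ 2 - Q) / 2| := by ring_nf
      _ ≤ (1 + ε) * m ^ 3 + ε * m ^ 2 / 2 := by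
        refine (abs_add_le _ _).trans (add_le_add ?_ ?_)
        · have h1 : |1 + x a| ≤ 1 + ε := (abs_add_le _ _).trans (by rw [abs_one]; linarith)
          rw [abs_mul]
          exact mul_le_mul h1 ih (abs_nonneg _) (by linarith)
        · rw [abs_div, abs_mul, abs_two]
          gcongr
      _ ≤ (m + ε) ^ 3 := by
        have hm2 : m ≤ 1 / 2 := by nlinarith
        nlinarith [mul_nonneg hε (pow_nonneg hm 2), mul_nonneg (mul_nonneg hε hm) hε,
          pow_nonneg hε 3]
      _ = ((#s + 1) * ε) ^ 3 := by ring

theorem one_half_le_prod_one_add (hε : 0 ≤ ε) (hx : ∀ i ∈ s, |x i| ≤ ε) (h : #s * ε ≤ 1 / 8) :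
    1 / 2 ≤ ∏ i ∈ s, (1 + x i) := by
  have hP := abs_le.mp (abs_prod_one_add_sub_le_s13 hε hx (by linarith))
  have hS := abs_le.mp (abs_sum_le_card_mul hx)
  have hSQ := abs_le.mp (abs_sq_sum_sub_sum_sq_le hx)
  have hm : 0 ≤ (#s : ℝ) * ε := by positivity
  nlinarith

theorem abs_inv_prod_one_add_sub_le (hε : 0 ≤ ε) (hx : ∀ i ∈ s, |x i| ≤ ε) (h : #s * ε ≤ 1 / 8) :
    |(∏ i ∈ s, (1 + x i))⁻¹ -
        (1 - ∑ i ∈ s, x i + ((∑ i ∈ s, x i) ^ 2 + ∑ i ∈ s, x i ^ 2) / 2)| ≤ 5 * (#s * ε) ^ 3 := by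
  have hPT := abs_prod_one_add_sub_le_s13 hε hx (by linarith)
  have hP := one_half_le_prod_one_add hε hx h
  have hS := abs_sum_le_card_mul hx
  have hSQ := abs_sq_sum_sub_sum_sq_le hx
  have hS2 := sq_sum_le_card_mul_sq hx
  have hQ := sum_sq_le_card_mul_sq hx
  have hQ0 : 0 ≤ ∑ i ∈ s, x i ^ 2 := sum_nonneg fun _ _ => sq_nonneg _
  set m : ℝ := #s * ε
  set S := ∑ i ∈ s, x i
  set Q := ∑ i ∈ s, x i ^ 2
  set P := ∏ i ∈ s, (1 + x i)
  have hm : 0 ≤ m := by positivity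
  have hB : |1 - S + (S ^ 2 + Q) / 2| ≤ 5 / 4 := by
    rw [abs_le] at hS ⊢
    constructor <;> nlinarith
  -- the second-order expansions of `P` and of `P⁻¹` multiply to
  -- `1 + S * Q + (S ^ 2 - Q) / 2 * ((S ^ 2 + Q) / 2)`, i.e. to `1` up to third order
  have key : P⁻¹ - (1 - S + (S ^ 2 + Q) / 2) =
      ((1 + S + (S ^ 2 - Q) / 2 - P) * (1 - S + (S ^ 2 + Q) / 2) - S * Q -
        (S ^ 2 - Q) / 2 * ((S ^ 2 + Q) / 2)) / P := by
    field_simp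
    ring
  have h1 : |(1 + S + (S ^ 2 - Q) / 2 - P) * (1 - S + (S ^ 2 + Q) / 2)| ≤ m ^ 3 * (5 / 4) := by
    rw [abs_mul, abs_sub_comm]
    exact mul_le_mul hPT hB (abs_nonneg _) (by positivity)
  have h2 : |S * Q| ≤ m * m ^ 2 := by
    rw [abs_mul, abs_of_nonneg hQ0]
    exact mul_le_mul hS hQ hQ0 hm
  have h3 : |(S ^ 2 - Q) / 2 * ((S ^ 2 + Q) / 2)| ≤ m ^ 2 / 2 * m ^ 2 := by
    rw [abs_mul, abs_div, abs_two, abs_of_nonneg (by positivity : 0 ≤ (S ^ 2 + Q) / 2)]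
    exact mul_le_mul (by linarith) (by linarith) (by positivity) (by positivity)
  have hm4 : m ^ 4 ≤ m ^ 3 / 8 := by nlinarith [pow_nonneg hm 3]
  rw [key, abs_div, abs_of_pos (show 0 < P by linarith), div_le_iff₀ (by linarith)]
  rw [abs_le] at h1 h2 h3 ⊢
  constructor <;> nlinarith [pow_nonneg hm 3]

end Finset

namespace Matrix
variable {n : Type*} [Fintype n] [DecidableEq n]

theorem abs_diag_le_l2_opNorm (A : Matrix n n ℝ) (i : n) : |A i i| ≤ ‖A‖ := by
  have h := A.l2_opNorm_mulVec (EuclideanSpace.single i 1)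
  simp only [PiLp.norm_single, norm_one, mul_one] at h
  refine le_trans ?_ h
  simpa using PiLp.norm_apply_le
    ((EuclideanSpace.equiv n ℝ).symm (A *ᵥ (EuclideanSpace.single i 1))) i

theorem det_conjStarAlgAut (u : unitary (Matrix n n ℝ)) (X : Matrix n n ℝ) :
    (Unitary.conjStarAlgAut ℝ _ u X).det = X.det := by
  rw [Unitary.conjStarAlgAut_apply, det_mul, det_mul, mul_right_comm, ← det_mul]
  simp

theorem trace_conjStarAlgAut (u : unitary (Matrix n n ℝ)) (X : Matrix n n ℝ) :
    (Unitary.conjStarAlgAut ℝ _ u X).trace = X.trace := by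
  rw [Unitary.conjStarAlgAut_apply, trace_mul_cycle]
  simp

namespace IsHermitian
variable {A : Matrix n n ℝ} (hA : A.IsHermitian)
include hA

theorem det_one_add : (1 + A).det = ∏ i, (1 + hA.eigenvalues i) := by
  conv_lhs => rw [hA.spectral_theorem, ← map_one (Unitary.conjStarAlgAut ℝ _ hA.eigenvectorUnitary),
    ← map_add, det_conjStarAlgAut, ← diagonal_one, diagonal_add, det_diagonal]
  simp

theorem trace_mul_self : (A * A).trace = ∑ i, hA.eigenvalues i ^ 2 := by
  conv_lhs => rw [hA.spectral_theorem, ← map_mul, trace_conjStarAlgAut, diagonal_mul_diagonal,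
    trace_diagonal]
  simp [sq]

theorem abs_eigenvalues_le (i : n) : |hA.eigenvalues i| ≤ ‖A‖ := by
  have : Nonempty n := ⟨i⟩
  simpa using spectrum.norm_le_norm_of_mem (hA.eigenvalues_mem_spectrum_real i)

theorem isUnit_one_add (h : Fintype.card n * ‖A‖ ≤ 1 / 8) : IsUnit (1 + A) := by
  have hx (i) (_ : i ∈ univ) : |hA.eigenvalues i| ≤ ‖A‖ := hA.abs_eigenvalues_le i
  rw [isUnit_iff_isUnit_det, hA.det_one_add, isUnit_iff_ne_zero]
  exact (lt_of_lt_of_le (by norm_num) (one_half_le_prod_one_add (norm_nonneg A) hx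
    (by rwa [card_univ]))).ne'

theorem abs_inv_det_one_add_sub_le (h : Fintype.card n * ‖A‖ ≤ 1 / 8) :
    |(1 + A).det⁻¹ - (1 - A.trace + (A.trace ^ 2 + (A * A).trace) / 2)| ≤
      5 * (Fintype.card n * ‖A‖) ^ 3 := by
  have hx (i) (_ : i ∈ univ) : |hA.eigenvalues i| ≤ ‖A‖ := hA.abs_eigenvalues_le i
  rw [hA.det_one_add, hA.trace_eq_sum_eigenvalues, hA.trace_mul_self, ← card_univ]
  exact abs_inv_prod_one_add_sub_le (norm_nonneg A) hx (by rwa [card_univ])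

end IsHermitian

theorem abs_trace_le (A : Matrix n n ℝ) : |A.trace| ≤ Fintype.card n * ‖A‖ := by
  calc |A.trace| ≤ ∑ i, |A i i| := abs_sum_le_sum_abs _ _
    _ ≤ ∑ _i : n, ‖A‖ := sum_le_sum fun i _ => abs_diag_le_l2_opNorm A i
    _ = Fintype.card n * ‖A‖ := by simp

theorem abs_trace_sq_add_trace_mul_self_sub_le (A B : Matrix n n ℝ) :
    |(A.trace ^ 2 + (A * A).trace) - (B.trace ^ 2 + (B * B).trace)| ≤
      (Fintype.card n ^ 2 + Fintype.card n) * ((‖A‖ + ‖B‖) * ‖A - B‖) := by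
  have hsq : A.trace ^ 2 - B.trace ^ 2 = (A - B).trace * (A + B).trace := by
    rw [trace_sub, trace_add]; ring
  have hmul : (A * A).trace - (B * B).trace = (A * (A - B) + (A - B) * B).trace := by
    rw [mul_sub, sub_mul, trace_add, trace_sub, trace_sub]; ring
  have hAB : ‖A + B‖ ≤ ‖A‖ + ‖B‖ := norm_add_le A B
  have hmul' : ‖A * (A - B) + (A - B) * B‖ ≤ (‖A‖ + ‖B‖) * ‖A - B‖ := by
    calc _ ≤ ‖A‖ * ‖A - B‖ + ‖A - B‖ * ‖B‖ :=
          (norm_add_le _ _).trans (add_le_add (norm_mul_le _ _) (norm_mul_le _ _))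
      _ = (‖A‖ + ‖B‖) * ‖A - B‖ := by ring
  have h1 : |A.trace ^ 2 - B.trace ^ 2| ≤ Fintype.card n ^ 2 * ((‖A‖ + ‖B‖) * ‖A - B‖) := by
    rw [hsq, abs_mul]
    calc _ ≤ (Fintype.card n * ‖A - B‖) * (Fintype.card n * ‖A + B‖) :=
          mul_le_mul (abs_trace_le _) (abs_trace_le _) (abs_nonneg _) (by positivity)
      _ ≤ (Fintype.card n * ‖A - B‖) * (Fintype.card n * (‖A‖ + ‖B‖)) := by gcongr
      _ = _ := by ring
  have h2 : |(A * A).trace - (B * B).trace| ≤ Fintype.card n * ((‖A‖ + ‖B‖) * ‖A - B‖) := by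
    rw [hmul]
    exact (abs_trace_le _).trans (by gcongr)
  calc _ = |(A.trace ^ 2 - B.trace ^ 2) + ((A * A).trace - (B * B).trace)| := by ring_nf
    _ ≤ _ := (abs_add_le _ _).trans (by linarith)

theorem IsHermitian.abs_inv_det_one_add_sub_sub_le [Nonempty n] {X Y : Matrix n n ℝ}
    (hX : X.IsHermitian) (hY : Y.IsHermitian) {σ : ℝ} (hXσ : ‖X‖ ≤ √2 * σ) (hYσ : ‖Y‖ ≤ σ ^ 2)
    (hσ : Fintype.card n * σ ≤ 1 / 16) :
    IsUnit (1 + (X - Y)) ∧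
      |(1 + (X - Y)).det⁻¹ - (1 - (X - Y).trace + (X.trace ^ 2 + (X * X).trace) / 2)| ≤
        44 * (Fintype.card n * σ) ^ 3 := by
  set N : ℝ := (Fintype.card n : ℝ) with hNdef
  have hN : 1 ≤ N := Nat.one_le_cast.mpr Fintype.card_pos
  have hσ0 : 0 ≤ σ := nonneg_of_mul_nonneg_right ((norm_nonneg X).trans hXσ) (by positivity)
  have hσ1 : σ ≤ 1 / 16 := by nlinarith
  have hXσ' : ‖X‖ ≤ 3 / 2 * σ := hXσ.trans (by gcongr; exact Real.sqrt_two_lt_three_halves.le)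
  have hE : ‖X - Y‖ ≤ 2 * σ := (norm_sub_le X Y).trans (by nlinarith)
  have hNE : N * ‖X - Y‖ ≤ 1 / 8 := by nlinarith
  refine ⟨(hX.sub hY).isUnit_one_add hNE, ?_⟩
  have h1 := (hX.sub hY).abs_inv_det_one_add_sub_le hNE
  have h2 := abs_trace_sq_add_trace_mul_self_sub_le (X - Y) X
  rw [sub_sub_cancel_left, norm_neg, ← hNdef] at h2
  rw [← hNdef] at h1
  have h1' : 5 * (N * ‖X - Y‖) ^ 3 ≤ 40 * (N * σ) ^ 3 := by
    have : N * ‖X - Y‖ ≤ 2 * (N * σ) := by nlinarith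
    nlinarith [pow_le_pow_left₀ (by positivity) this 3]
  have h2' : (N ^ 2 + N) * ((‖X - Y‖ + ‖X‖) * ‖Y‖) ≤ 7 * (N * σ) ^ 3 := by
    have hN2 : N ^ 2 + N ≤ 2 * N ^ 3 := by nlinarith
    have : (‖X - Y‖ + ‖X‖) * ‖Y‖ ≤ 7 / 2 * σ * σ ^ 2 :=
      mul_le_mul (by linarith) hYσ (norm_nonneg _) (by positivity)
    calc _ ≤ 2 * N ^ 3 * (7 / 2 * σ * σ ^ 2) := mul_le_mul hN2 this (by positivity) (by positivity)
      _ = _ := by ring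
  calc _ = |((1 + (X - Y)).det⁻¹ -
        (1 - (X - Y).trace + ((X - Y).trace ^ 2 + ((X - Y) * (X - Y)).trace) / 2)) +
        (((X - Y).trace ^ 2 + ((X - Y) * (X - Y)).trace) -
          (X.trace ^ 2 + (X * X).trace)) / 2| := by ring_nf
    _ ≤ _ := by
      refine (abs_add_le _ _).trans ?_
      rw [abs_div, abs_two]
      linarith [pow_nonneg (mul_nonneg (by linarith : 0 ≤ N) hσ0) 3]

theorem IsHermitian.abs_inv_det_one_sub_smul_add_smul_le [Nonempty n] {G H : Matrix n n ℝ}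
    (hG : G.IsHermitian) (hH : H.IsHermitian) {L δ : ℝ} (hGL : ‖G‖ ≤ √L) (hHL : ‖H‖ ≤ L)
    (hδ : 0 ≤ δ) (hδL : Fintype.card n * √(δ * L) ≤ 1 / 16) :
    IsUnit (1 - δ • H + √(2 * δ) • G) ∧
      |(1 - δ • H + √(2 * δ) • G).det⁻¹ -
          (1 - √(2 * δ) * G.trace + δ * H.trace + δ * G.trace ^ 2 + δ * (G * G).trace)| ≤
        44 * (Fintype.card n * √(δ * L)) ^ 3 := by
  have hL : 0 ≤ L := (norm_nonneg H).trans hHL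
  have hX : ‖√(2 * δ) • G‖ ≤ √2 * √(δ * L) := by
    calc ‖√(2 * δ) • G‖ = √(2 * δ) * ‖G‖ := by rw [norm_smul, Real.norm_of_nonneg (by positivity)]
      _ ≤ √(2 * δ) * √L := by gcongr
      _ = √2 * √(δ * L) := by rw [Real.sqrt_mul zero_le_two, Real.sqrt_mul hδ, mul_assoc]
  have hY : ‖δ • H‖ ≤ √(δ * L) ^ 2 := by
    rw [norm_smul, Real.norm_of_nonneg hδ, Real.sq_sqrt (by positivity)]
    gcongr
  have hM : 1 - δ • H + √(2 * δ) • G = 1 + (√(2 * δ) • G - δ • H) := by abel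
  have hF : 1 - √(2 * δ) * G.trace + δ * H.trace + δ * G.trace ^ 2 + δ * (G * G).trace =
      1 - (√(2 * δ) • G - δ • H).trace +
        ((√(2 * δ) • G).trace ^ 2 + (√(2 * δ) • G * √(2 * δ) • G).trace) / 2 := by
    simp only [trace_sub, trace_smul, smul_mul_smul_comm, smul_eq_mul]
    rw [mul_pow, Real.sq_sqrt (by positivity), Real.mul_self_sqrt (by positivity)]
    ring
  rw [hM, hF]
  exact (hG.smul (IsSelfAdjoint.all _)).abs_inv_det_one_add_sub_sub_le
    (hH.smul (IsSelfAdjoint.all _)) hX hY hδL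

end Matrix

theorem stmt13_general {d : ℕ} (L : ℝ)
    (G : Matrix (Fin d) (Fin d) ℝ) (hGsymm : G.IsSymm)
    (hG : matOpNorm G ≤ Real.sqrt L)
    (H : Matrix (Fin d) (Fin d) ℝ) (hHsymm : H.IsSymm) (hH : matOpNorm H ≤ L)
    (δ : ℝ) (hδ0 : 0 < δ) (hδ : δ ≤ 1 / (2 ^ 8 * d ^ 2 * L)) :
    IsUnit (1 - δ • H + Real.sqrt (2 * δ) • G) ∧
      |((1 - δ • H + Real.sqrt (2 * δ) • G).det)⁻¹ -
          (1 - Real.sqrt (2 * δ) * G.trace + δ * H.trace + δ * G.trace ^ 2 +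
            δ * (G * G).trace)| ≤
        90 * (δ * Real.sqrt δ) * (d : ℝ) ^ 3 * (L * Real.sqrt L) := by
  have hpos : 0 < 2 ^ 8 * (d : ℝ) ^ 2 * L := one_div_pos.mp (hδ0.trans_le hδ)
  have hL : 0 < L := pos_of_mul_pos_right hpos (by positivity)
  have : Nonempty (Fin d) :=
    Fin.pos_iff_nonempty.mp (Nat.pos_of_ne_zero (by rintro rfl; simp at hpos))
  have hσ2 : √(δ * L) ^ 2 = δ * L := Real.sq_sqrt (by positivity)
  have hdσ : (d : ℝ) * √(δ * L) ≤ 1 / 16 := by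
    rw [le_div_iff₀ hpos] at hδ
    nlinarith [mul_nonneg (Nat.cast_nonneg d) (Real.sqrt_nonneg (δ * L))]
  have hσ3 : δ * √δ * (L * √L) = √(δ * L) ^ 3 := by
    rw [pow_succ, hσ2, Real.sqrt_mul hδ0.le]
    ring
  have hG' := Matrix.isHermitian_iff_isSymm.mpr hGsymm
  obtain ⟨hunit, happrox⟩ := hG'.abs_inv_det_one_sub_smul_add_smul_le
    (Matrix.isHermitian_iff_isSymm.mpr hHsymm) hG hH hδ0.le (by rwa [Fintype.card_fin])
  rw [Fintype.card_fin] at happrox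
  refine ⟨hunit, ?_⟩
  calc _ ≤ 44 * ((d : ℝ) * √(δ * L)) ^ 3 := happrox
    _ ≤ 90 * ((d : ℝ) * √(δ * L)) ^ 3 := by gcongr; norm_num
    _ = 90 * (δ * √δ) * (d : ℝ) ^ 3 * (L * √L) := by rw [mul_pow, ← hσ3]; ring

theorem stmt13 {d : ℕ} (hd : 0 < d) (L : ℝ) (hL : 0 < L)
    (G : Matrix (Fin d) (Fin d) ℝ) (hGsymm : G.IsSymm)
    (hG : matOpNorm G ≤ Real.sqrt L)
    (H : Matrix (Fin d) (Fin d) ℝ) (hHsymm : H.IsSymm) (hH : matOpNorm H ≤ L)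
    (δ : ℝ) (hδ0 : 0 < δ) (hδ : δ ≤ 1 / (2 ^ 8 * d ^ 2 * L)) :
    IsUnit (1 - δ • H + Real.sqrt (2 * δ) • G) ∧
      |((1 - δ • H + Real.sqrt (2 * δ) • G).det)⁻¹ -
          (1 - Real.sqrt (2 * δ) * G.trace + δ * H.trace + δ * G.trace ^ 2 +
            δ * (G * G).trace)| ≤
        90 * (δ * Real.sqrt δ) * (d : ℝ) ^ 3 * (L * Real.sqrt L) :=
  stmt13_general L G hGsymm hG H hHsymm hH δ hδ0 hδ
end
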